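/- arXiv:2309.10529 — 3 statements merged into one kernel-verified Lean document; each statement's English description precedes it below -/
import Mathlib

section
/- Let m ≥ 2 be an integer and B_1, B_2 > 1 real numbers with B_2 ≤ B_1^{1/2}. Then the set 𝓕^m_{B_1,B_2} = { x ∈ (0,1) irrational : a_n(x)·a_{n+1}(x)⋯a_{n+m−1}(x) ≥ B_1^n for infinitely many n ∈ ℕ, and a_{n+1}(x)·a_{n+2}(x)⋯a_{n+m−1}(x) < B_2^n for all sufficiently large n ∈ ℕ } is empty. -/
/-!
Only the integrality of the partial quotients matters. Write `P_n = a_{n+1} ⋯ a_{n+m-1}`, so that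
the second condition says `P_n < B₂^n` eventually. If `a_n ⋯ a_{n+m-1}` is nonzero, `a_n` divides
the nonzero natural number `a_n ⋯ a_{n+m-2} = P_{n-1}`, so `a_n ⋯ a_{n+m-1} ≤ P_{n-1} P_n <
B₂^{2n-1} ≤ B₁^n` for all large `n`, and the first condition fails.
-/

open Filter MeasureTheory Set

/-- The Gauss map `T(x) = 1/x - ⌊1/x⌋`. -/
noncomputable def gaussMap (x : ℝ) : ℝ := 1 / x - (⌊1 / x⌋ : ℤ)

/-- The `n`-th partial quotient `a_n(x)` (for `n ≥ 1`) of the continued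
fraction expansion of `x`: `a_n(x) = ⌊1 / T^{n-1}(x)⌋`. -/
noncomputable def pq (x : ℝ) (n : ℕ) : ℕ := ⌊1 / (gaussMap^[n - 1] x)⌋₊

/-- The continuant `q_n(a_1, …, a_n)`: `q_0 = 1`, `q_1 = a_1`,
`q_k = a_k q_{k-1} + q_{k-2}`. -/
def contQ : (n : ℕ) → (Fin n → ℕ) → ℕ
  | 0, _ => 1
  | 1, a => a 0
  | (n + 2), a =>
      a (Fin.last (n + 1)) * contQ (n + 1) (Fin.init a) +
        contQ n (Fin.init (Fin.init a))

/-- `s_B`: the Wang–Wu pressure exponent. -/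
noncomputable def sExp (B : ℝ) : ℝ :=
  sInf {s : ℝ | 0 ≤ s ∧
    Filter.atTop.limsup (fun n : ℕ =>
      (((n : ℝ)⁻¹ : ℝ) : EReal) * ENNReal.log (∑' a : Fin n → ℕ+,
        ENNReal.ofReal ((B ^ n * ((contQ n fun i => (a i : ℕ)) : ℝ) ^ 2) ^ (-s)))) ≤ 0}

/-- `g_{B₁,B₂}`: the two-parameter pressure exponent. -/
noncomputable def gExp (B₁ B₂ : ℝ) : ℝ :=
  sInf {s : ℝ | 0 ≤ s ∧
    Filter.atTop.limsup (fun n : ℕ =>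
      (((n : ℝ)⁻¹ : ℝ) : EReal) * ENNReal.log (∑' a : Fin n → ℕ+,
        ENNReal.ofReal (B₂ ^ ((1 - s) * (n : ℝ)) *
          (B₁ ^ n * ((contQ n fun i => (a i : ℕ)) : ℝ) ^ 2) ^ (-s)))) ≤ 0}

open Finset

lemma prod_range_succ_add_eq_mul {M : Type*} [CommMonoid M] (f : ℕ → M) (n k : ℕ) :
    ∏ i ∈ range (k + 1), f (n + i) = f n * ∏ i ∈ range k, f (n + 1 + i) := by
  rw [prod_range_succ', mul_comm]
  simp only [add_zero, add_assoc, add_comm 1]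

lemma prod_range_succ_add_le_mul (a : ℕ → ℕ) {k : ℕ} (hk : 0 < k) (n : ℕ) :
    ∏ i ∈ range (k + 1), a (n + i) ≤
      (∏ i ∈ range k, a (n + i)) * ∏ i ∈ range k, a (n + 1 + i) := by
  rw [prod_range_succ_add_eq_mul]
  rcases Nat.eq_zero_or_pos (a n * ∏ i ∈ range k, a (n + 1 + i)) with hzero | hpos
  · simp [hzero]
  have hfirst_dvd_full : ∏ i ∈ range k, a (n + i) ∣ a n * ∏ i ∈ range k, a (n + 1 + i) := by
    rw [← prod_range_succ_add_eq_mul]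
    exact prod_dvd_prod_of_subset _ _ _ (range_subset_range.2 k.le_succ)
  have han_dvd : a n ∣ ∏ i ∈ range k, a (n + i) :=
    dvd_prod_of_mem (fun i => a (n + i)) (mem_range.2 hk)
  exact Nat.mul_le_mul_right _ (Nat.le_of_dvd (Nat.pos_of_dvd_of_pos hfirst_dvd_full hpos) han_dvd)

lemma eventually_prod_range_succ_lt_pow (a : ℕ → ℕ) {k : ℕ} (hk : 0 < k) {B₁ B₂ : ℝ}
    (hB₂ : 1 ≤ B₂) (hB : B₂ ^ 2 ≤ B₁)
    (htail : ∀ᶠ n in atTop, ∏ i ∈ range k, (a (n + 1 + i) : ℝ) < B₂ ^ n) :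
    ∀ᶠ n in atTop, ∏ i ∈ range (k + 1), (a (n + i) : ℝ) < B₁ ^ n := by
  obtain ⟨N, hN⟩ := eventually_atTop.1 htail
  refine eventually_atTop.2 ⟨N + 1, fun n hn => ?_⟩
  obtain ⟨n, rfl⟩ : ∃ n', n = n' + 1 := ⟨n - 1, by omega⟩
  calc ∏ i ∈ range (k + 1), (a (n + 1 + i) : ℝ)
      ≤ (∏ i ∈ range k, (a (n + 1 + i) : ℝ)) * ∏ i ∈ range k, (a (n + 1 + 1 + i) : ℝ) := by
        simp only [← Nat.cast_prod]
        exact_mod_cast prod_range_succ_add_le_mul a hk (n + 1)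
    _ < B₂ ^ n * B₂ ^ (n + 1) :=
        mul_lt_mul'' (hN n (by omega)) (hN (n + 1) (by omega)) (by positivity) (by positivity)
    _ ≤ (B₂ ^ 2) ^ (n + 1) := by
        rw [← pow_mul, ← pow_add]
        exact pow_le_pow_right₀ hB₂ (by omega)
    _ ≤ B₁ ^ (n + 1) := pow_le_pow_left₀ (by positivity) hB _

theorem new_application_empty_general (m : ℕ) (hm : 2 ≤ m) (B₁ B₂ : ℝ)
    (hB₂ : 1 < B₂) (hcase : B₂ ≤ B₁ ^ ((1 : ℝ) / 2)) :
    {x : ℝ | x ∈ Set.Ioo (0 : ℝ) 1 ∧ Irrational x ∧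
      {n : ℕ | B₁ ^ n ≤ ∏ i ∈ Finset.range m, (pq x (n + i) : ℝ)}.Infinite ∧
      (∀ᶠ n : ℕ in Filter.atTop,
        ∏ i ∈ Finset.range (m - 1), (pq x (n + 1 + i) : ℝ) < B₂ ^ n)} = ∅ := by
  have hsq : B₂ ^ 2 ≤ B₁ := by
    rw [← Real.sqrt_eq_rpow] at hcase
    exact (Real.le_sqrt' (by linarith)).1 hcase
  obtain ⟨k, rfl⟩ : ∃ k, m = k + 1 := ⟨m - 1, by omega⟩
  refine Set.eq_empty_of_forall_notMem fun x ⟨_, _, hinf, htail⟩ => ?_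
  rw [Nat.add_sub_cancel] at htail
  obtain ⟨n, hge, hlt⟩ := ((Nat.frequently_atTop_iff_infinite.2 hinf).and_eventually
    (eventually_prod_range_succ_lt_pow (pq x) (by omega) hB₂.le hsq htail)).exists
  exact hge.not_gt hlt

theorem new_application_empty (m : ℕ) (hm : 2 ≤ m) (B₁ B₂ : ℝ)
    (hB₁ : 1 < B₁) (hB₂ : 1 < B₂) (hcase : B₂ ≤ B₁ ^ ((1 : ℝ) / 2)) :
    {x : ℝ | x ∈ Set.Ioo (0 : ℝ) 1 ∧ Irrational x ∧
      {n : ℕ | B₁ ^ n ≤ ∏ i ∈ Finset.range m, (pq x (n + i) : ℝ)}.Infinite ∧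
      (∀ᶠ n : ℕ in Filter.atTop,
        ∏ i ∈ Finset.range (m - 1), (pq x (n + 1 + i) : ℝ) < B₂ ^ n)} = ∅ :=
  new_application_empty_general m hm B₁ B₂ hB₂ hcase
end

section
/- Let N ≥ 1 and M ≥ 1 be integers, and let β′, β, γ′, γ ≥ 1 be real numbers. Suppose s, t ≥ 0 satisfy Σ_{(a_1,…,a_N) ∈ {1,…,M}^N} (β′)^N·((β·β′)^N·q_N(a_1,…,a_N)²)^{−s} = 1 and Σ_{(a_1,…,a_N) ∈ {1,…,M}^N} (γ′)^N·((γ·γ′)^N·q_N(a_1,…,a_N)²)^{−t} = 1, and that s ≤ t. Then (β′)^{1−s}·β^{−s} ≤ (γ′)^{1−s}·γ^{−s}. -/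
open Filter MeasureTheory Set

lemma contQ_pos' : ∀ (n : ℕ) (a : Fin n → ℕ), (∀ i, 1 ≤ a i) → 1 ≤ contQ n a
  | 0, _, _ => le_refl 1
  | 1, a, h => h 0
  | (n + 2), a, h => by
      have h1 := contQ_pos' (n + 1) (Fin.init a) (fun i => h _)
      have h2 := h (Fin.last (n + 1))
      simp only [contQ]
      nlinarith

lemma key (b b' : ℝ) (hb : 1 ≤ b) (hb' : 1 ≤ b') (s q : ℝ) (hq : 1 ≤ q) (N : ℕ) :
    b' ^ N * ((b * b') ^ N * q ^ 2) ^ (-s) =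
      (b' ^ (1 - s) * b ^ (-s)) ^ N * q ^ (-(2 * s)) := by
  have hb0 : (0:ℝ) < b := lt_of_lt_of_le one_pos hb
  have hb'0 : (0:ℝ) < b' := lt_of_lt_of_le one_pos hb'
  have hq0 : (0:ℝ) < q := lt_of_lt_of_le one_pos hq
  have hL : (0:ℝ) < b' ^ N * ((b * b') ^ N * q ^ 2) ^ (-s) := by positivity
  have hR : (0:ℝ) < (b' ^ (1 - s) * b ^ (-s)) ^ N * q ^ (-(2 * s)) := by positivity
  rw [← Real.exp_log hL, ← Real.exp_log hR]
  congr 1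
  rw [Real.log_mul (by positivity) (by positivity),
    Real.log_mul (by positivity) (by positivity),
    Real.log_rpow (by positivity), Real.log_rpow (by positivity),
    Real.log_pow, Real.log_pow,
    Real.log_mul (by positivity) (by positivity),
    Real.log_pow, Real.log_pow,
    Real.log_mul (by positivity) (by positivity),
    Real.log_mul (by positivity) (by positivity),
    Real.log_rpow hb'0, Real.log_rpow hb0]
  ring

theorem dimensional_number_comparison (N M : ℕ) (hN : 1 ≤ N) (hM : 1 ≤ M)
    (β' β γ' γ : ℝ) (hβ' : 1 ≤ β') (hβ : 1 ≤ β) (hγ' : 1 ≤ γ') (hγ : 1 ≤ γ)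
    (s t : ℝ) (hs : 0 ≤ s) (ht : 0 ≤ t)
    (heqs : (∑ a ∈ Fintype.piFinset (fun _ : Fin N => Finset.Icc 1 M),
      β' ^ N * ((β * β') ^ N * ((contQ N a : ℝ)) ^ 2) ^ (-s)) = 1)
    (heqt : (∑ a ∈ Fintype.piFinset (fun _ : Fin N => Finset.Icc 1 M),
      γ' ^ N * ((γ * γ') ^ N * ((contQ N a : ℝ)) ^ 2) ^ (-t)) = 1)
    (hst : s ≤ t) :
    β' ^ (1 - s) * β ^ (-s) ≤ γ' ^ (1 - s) * γ ^ (-s) := by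
  by_contra hlt
  push_neg at hlt
  set A := β' ^ (1 - s) * β ^ (-s) with hA
  set C := γ' ^ (1 - s) * γ ^ (-s) with hC
  have hβ0 : (0:ℝ) < β := lt_of_lt_of_le one_pos hβ
  have hβ'0 : (0:ℝ) < β' := lt_of_lt_of_le one_pos hβ'
  have hγ0 : (0:ℝ) < γ := lt_of_lt_of_le one_pos hγ
  have hγ'0 : (0:ℝ) < γ' := lt_of_lt_of_le one_pos hγ'
  have hC0 : 0 ≤ C := by positivity
  -- the index finset is nonempty
  have hne : (Fintype.piFinset (fun _ : Fin N => Finset.Icc 1 M)).Nonempty := by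
    refine ⟨fun _ => 1, ?_⟩
    simp [Fintype.mem_piFinset, hM]
  -- strict termwise inequality
  have hterm : ∀ a ∈ Fintype.piFinset (fun _ : Fin N => Finset.Icc 1 M),
      γ' ^ N * ((γ * γ') ^ N * ((contQ N a : ℝ)) ^ 2) ^ (-t) <
      β' ^ N * ((β * β') ^ N * ((contQ N a : ℝ)) ^ 2) ^ (-s) := by
    intro a ha
    have hq1 : (1:ℝ) ≤ (contQ N a : ℝ) := by
      have : 1 ≤ contQ N a := by
        apply contQ_pos'
        intro i
        have := (Fintype.mem_piFinset.mp ha) i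
        exact (Finset.mem_Icc.mp this).1
      exact_mod_cast this
    set q : ℝ := (contQ N a : ℝ)
    have hq0 : (0:ℝ) < q := lt_of_lt_of_le one_pos hq1
    rw [key β β' hβ hβ' s q hq1 N, key γ γ' hγ hγ' t q hq1 N]
    -- γ'^(1-t) γ^(-t) ≤ C
    have hCt : γ' ^ (1 - t) * γ ^ (-t) ≤ C := by
      have h1 : γ' ^ (1 - t) ≤ γ' ^ (1 - s) :=
        Real.rpow_le_rpow_of_exponent_le hγ' (by linarith)
      have h2 : γ ^ (-t) ≤ γ ^ (-s) :=
        Real.rpow_le_rpow_of_exponent_le hγ (by linarith)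
      have := mul_le_mul h1 h2 (by positivity) (by positivity)
      linarith [this]
    have hqts : q ^ (-(2 * t)) ≤ q ^ (-(2 * s)) :=
      Real.rpow_le_rpow_of_exponent_le hq1 (by linarith)
    have step1 : (γ' ^ (1 - t) * γ ^ (-t)) ^ N * q ^ (-(2 * t)) ≤ C ^ N * q ^ (-(2 * s)) :=
      mul_le_mul (pow_le_pow_left₀ (by positivity) hCt N) hqts (by positivity) (by positivity)
    have step2 : C ^ N * q ^ (-(2 * s)) < A ^ N * q ^ (-(2 * s)) :=
      mul_lt_mul_of_pos_right (pow_lt_pow_left₀ hlt hC0 (by omega)) (by positivity)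
    linarith
  have hsum := Finset.sum_lt_sum_of_nonempty hne hterm
  rw [heqs, heqt] at hsum
  exact lt_irrefl 1 hsum
end

section
/- Let β > 1 be a real number, k ≥ 1 an integer, and 0 < s < 1. Then there exist constants c, C > 0 (depending only on β, k and s) such that for all integers n ≥ 1: c·n^{k−1}·β^{n(1−s)} ≤ Σ_{(a_1,…,a_k) ∈ (ℕ≥1)^k, a_1·a_2⋯a_k ≤ β^n} (a_1·a_2⋯a_k)^{−s} ≤ C·n^{k−1}·β^{n(1−s)}. -/
open Filter MeasureTheory Set

/-!
Write `G_k(X)` (`prodPowSum s k X`) for the sum over `k`-tuples with product at most `X`.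
Splitting off the first coordinate gives `G_{k+1}(X) = ∑_b b^{-s} G_k(X / b)`, and since
`b^{-s} (X / b)^{1-s} = X^{1-s} / b`, an estimate `G_k(Y) ≍ Y^{1-s} (log Y)^{k-1}` turns the
recursion into the harmonic sum `X^{1-s} (log X)^{k-1} ∑_{b ≤ X} 1 / b`, which contributes
one more factor `log X`; for the lower bound only `b ≤ √X` is kept, where
`log (X / b) ≥ log X / 2`. The base case `G_1(X) = ∑_{b ≤ X} b^{-s} ≍ X^{1-s}` comes from
Bernoulli's inequality and telescoping. Taking `X = β^n` gives the theorem.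
-/

open scoped ENNReal
open Finset

lemma one_sub_mul_add_one_rpow_neg_le {s : ℝ} (hs0 : 0 ≤ s) (hs1 : s ≤ 1) {x : ℝ}
    (hx : 0 ≤ x) :
    (1 - s) * (x + 1) ^ (-s) ≤ (x + 1) ^ (1 - s) - x ^ (1 - s) := by
  have hx1 : 0 < x + 1 := by linarith
  have bernoulli := rpow_one_add_le_one_add_mul_self (s := -(x + 1)⁻¹)
    (by rw [neg_le_neg_iff]; exact inv_le_one_of_one_le₀ (by linarith))
    (p := 1 - s) (by linarith) (by linarith)
  have hratio : 1 + -(x + 1)⁻¹ = x / (x + 1) := by field_simp; ring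
  rw [hratio, Real.div_rpow hx hx1.le, div_le_iff₀ (by positivity)] at bernoulli
  have hpow : (x + 1) ^ (-s) = (x + 1) ^ (1 - s) * (x + 1)⁻¹ := by
    rw [← Real.rpow_neg_one, ← Real.rpow_add hx1]; ring_nf
  rw [hpow]
  nlinarith

lemma one_sub_mul_sum_range_rpow_neg_le {s : ℝ} (hs0 : 0 ≤ s) (hs1 : s < 1) (N : ℕ) :
    (1 - s) * ∑ n ∈ range N, ((n : ℝ) + 1) ^ (-s) ≤ (N : ℝ) ^ (1 - s) := by
  calc (1 - s) * ∑ n ∈ range N, ((n : ℝ) + 1) ^ (-s)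
      ≤ ∑ n ∈ range N, (((n + 1 : ℕ) : ℝ) ^ (1 - s) - (n : ℝ) ^ (1 - s)) := by
        rw [mul_sum]
        gcongr with n
        push_cast
        exact one_sub_mul_add_one_rpow_neg_le hs0 hs1.le n.cast_nonneg
    _ = (N : ℝ) ^ (1 - s) := by
        rw [sum_range_sub (fun n : ℕ => (n : ℝ) ^ (1 - s))]
        simp [Real.zero_rpow (by linarith : (1 - s) ≠ 0)]

lemma rpow_one_sub_div_two_le_sum_range_rpow_neg {s X : ℝ} (hs : 0 ≤ s) (hX : 1 ≤ X) :
    X ^ (1 - s) / 2 ≤ ∑ n ∈ range ⌊X⌋₊, ((n : ℝ) + 1) ^ (-s) := by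
  have hX0 : 0 < X := by linarith
  have hfloor : X / 2 ≤ ⌊X⌋₊ := by
    have := Nat.lt_floor_add_one X
    have : (1 : ℝ) ≤ ⌊X⌋₊ := by exact_mod_cast Nat.floor_pos.mpr hX
    linarith
  have hterm : ∀ n ∈ range ⌊X⌋₊, X ^ (-s) ≤ ((n : ℝ) + 1) ^ (-s) := by
    intro n hn
    have : ((n : ℝ) + 1) ≤ X := by
      have := (Nat.le_floor_iff hX0.le).mp (mem_range.mp hn)
      push_cast at this; exact this
    exact Real.rpow_le_rpow_of_nonpos (by positivity) this (by linarith)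
  calc X ^ (1 - s) / 2 = X / 2 * X ^ (-s) := by
        rw [sub_eq_add_neg, Real.rpow_add hX0, Real.rpow_one]; ring
    _ ≤ ⌊X⌋₊ * X ^ (-s) := by gcongr
    _ ≤ ∑ n ∈ range ⌊X⌋₊, ((n : ℝ) + 1) ^ (-s) := by
        simpa using card_nsmul_le_sum _ _ _ hterm

-- Valued in `ℝ≥0∞` so that the recursion over the first coordinate needs no summability.
noncomputable def prodPowSum (s : ℝ) (k : ℕ) (X : ℝ) : ℝ≥0∞ :=
  ∑' a : Fin k → ℕ+,
    if (∏ i, ((a i : ℕ) : ℝ)) ≤ X then ENNReal.ofReal ((∏ i, ((a i : ℕ) : ℝ)) ^ (-s))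
    else 0

lemma one_le_prod_coe_pnat {k : ℕ} (a : Fin k → ℕ+) : 1 ≤ ∏ i, ((a i : ℕ) : ℝ) :=
  Finset.one_le_prod fun i _ => Nat.one_le_cast.mpr (a i).pos

lemma prodPowSum_eq_zero {s X : ℝ} {k : ℕ} (hX : X < 1) : prodPowSum s k X = 0 :=
  ENNReal.tsum_eq_zero.mpr fun a => if_neg (by linarith [one_le_prod_coe_pnat a])

lemma prodPowSum_one (s X : ℝ) :
    prodPowSum s 1 X =
      ∑' b : ℕ+,
        if ((b : ℕ) : ℝ) ≤ X then ENNReal.ofReal (((b : ℕ) : ℝ) ^ (-s)) else 0 := by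
  rw [prodPowSum, ← (Equiv.funUnique (Fin 1) ℕ+).symm.tsum_eq]
  simp

lemma prodPowSum_succ (s : ℝ) (k : ℕ) (X : ℝ) :
    prodPowSum s (k + 1) X =
      ∑' b : ℕ+,
        ENNReal.ofReal (((b : ℕ) : ℝ) ^ (-s)) * prodPowSum s k (X / ((b : ℕ) : ℝ)) := by
  rw [prodPowSum, ← (Fin.consEquiv fun _ => ℕ+).tsum_eq, ENNReal.tsum_prod']
  refine tsum_congr fun b => ?_
  rw [prodPowSum, ← ENNReal.tsum_mul_left]
  refine tsum_congr fun a => ?_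
  have hb : (0 : ℝ) < ((b : ℕ) : ℝ) := by exact_mod_cast b.pos
  have hcons : ∏ i, (((Fin.consEquiv fun _ => ℕ+) (b, a) i : ℕ) : ℝ) =
      ((b : ℕ) : ℝ) * ∏ i, ((a i : ℕ) : ℝ) := Fin.prod_univ_succ _
  simp only [hcons, ← le_div_iff₀' hb]
  split_ifs
  · rw [Real.mul_rpow hb.le (by linarith [one_le_prod_coe_pnat a]),
      ENNReal.ofReal_mul (by positivity)]
  · rw [mul_zero]

lemma tsum_pnat_ite_le_eq_sum_range (f : ℝ → ℝ≥0∞) {Y : ℝ} (hY : 0 ≤ Y) :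
    (∑' b : ℕ+, if ((b : ℕ) : ℝ) ≤ Y then f ((b : ℕ) : ℝ) else 0) =
      ∑ n ∈ range ⌊Y⌋₊, f ((n : ℝ) + 1) := by
  have hmem (n : ℕ) : ((n : ℝ) + 1 ≤ Y) ↔ n ∈ range ⌊Y⌋₊ := by
    rw [Finset.mem_range, ← Nat.succ_le_iff, Nat.le_floor_iff hY, Nat.cast_succ]
  rw [← Equiv.pnatEquivNat.symm.tsum_eq, tsum_eq_sum (s := range ⌊Y⌋₊)]
  · exact sum_congr rfl fun n hn => by simp [(hmem n).mpr hn]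
  · intro n hn
    simp [(hmem n).not.mpr hn]

lemma tsum_pnat_ite_le_ofReal_div {K Y : ℝ} (hK : 0 ≤ K) (hY : 0 ≤ Y) :
    (∑' b : ℕ+, if ((b : ℕ) : ℝ) ≤ Y then ENNReal.ofReal (K / ((b : ℕ) : ℝ)) else 0) =
      ENNReal.ofReal (K * harmonic ⌊Y⌋₊) := by
  rw [tsum_pnat_ite_le_eq_sum_range (fun t => ENNReal.ofReal (K / t)) hY,
    ← ENNReal.ofReal_sum_of_nonneg fun n _ => by positivity, harmonic]
  push_cast
  simp only [mul_sum, div_eq_mul_inv]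

lemma prodPowSum_one_eq_ofReal_sum (s : ℝ) {X : ℝ} (hX : 0 ≤ X) :
    prodPowSum s 1 X = ENNReal.ofReal (∑ n ∈ range ⌊X⌋₊, ((n : ℝ) + 1) ^ (-s)) := by
  rw [prodPowSum_one, tsum_pnat_ite_le_eq_sum_range (fun t => ENNReal.ofReal (t ^ (-s))) hX,
    ENNReal.ofReal_sum_of_nonneg fun n _ => by positivity]

lemma rpow_neg_mul_div_rpow_one_sub (s : ℝ) {b X : ℝ} (hb : 0 < b) (hX : 0 ≤ X) :
    b ^ (-s) * (X / b) ^ (1 - s) = X ^ (1 - s) / b := by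
  rw [Real.div_rpow hX hb.le, Real.rpow_sub hb, Real.rpow_one, Real.rpow_neg hb.le]
  field_simp

lemma rpow_neg_mul_prodPowSum_div_le {s C : ℝ} {k m : ℕ} (hC : 0 ≤ C)
    (h : ∀ Y, 1 ≤ Y →
      prodPowSum s k Y ≤ ENNReal.ofReal (C * Y ^ (1 - s) * (1 + Real.log Y) ^ m))
    {X b : ℝ} (hb : 1 ≤ b) :
    ENNReal.ofReal (b ^ (-s)) * prodPowSum s k (X / b) ≤
      if b ≤ X then ENNReal.ofReal (C * X ^ (1 - s) * (1 + Real.log X) ^ m / b) else 0 := by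
  have hb0 : 0 < b := by linarith
  split_ifs with hbX
  · have hX0 : 0 < X := by linarith
    have hXb : 1 ≤ X / b := (one_le_div hb0).mpr hbX
    have hlog : Real.log (X / b) ≤ Real.log X :=
      Real.log_le_log (by positivity) (div_le_self hX0.le hb)
    calc _ ≤ ENNReal.ofReal (b ^ (-s)) *
          ENNReal.ofReal (C * (X / b) ^ (1 - s) * (1 + Real.log (X / b)) ^ m) :=
          mul_le_mul_right (h _ hXb) _
      _ = ENNReal.ofReal (C * (b ^ (-s) * (X / b) ^ (1 - s)) * (1 + Real.log (X / b)) ^ m) := by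
          rw [← ENNReal.ofReal_mul (by positivity)]; ring_nf
      _ ≤ ENNReal.ofReal (C * X ^ (1 - s) * (1 + Real.log X) ^ m / b) := by
          rw [rpow_neg_mul_div_rpow_one_sub s hb0 hX0.le]
          refine ENNReal.ofReal_le_ofReal ?_
          calc _ ≤ C * (X ^ (1 - s) / b) * (1 + Real.log X) ^ m := by
                gcongr
                linarith [Real.log_nonneg hXb]
            _ = _ := by ring
  · rw [prodPowSum_eq_zero ((div_lt_one hb0).mpr (not_le.mp hbX)), mul_zero]

lemma prodPowSum_succ_le {s C : ℝ} {k m : ℕ} (hC : 0 ≤ C)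
    (h : ∀ Y, 1 ≤ Y →
      prodPowSum s k Y ≤ ENNReal.ofReal (C * Y ^ (1 - s) * (1 + Real.log Y) ^ m))
    {X : ℝ} (hX : 1 ≤ X) :
    prodPowSum s (k + 1) X ≤ ENNReal.ofReal (C * X ^ (1 - s) * (1 + Real.log X) ^ (m + 1)) := by
  have hK : 0 ≤ C * X ^ (1 - s) * (1 + Real.log X) ^ m := by
    positivity [Real.log_nonneg hX]
  calc prodPowSum s (k + 1) X
      = ∑' b : ℕ+,
          ENNReal.ofReal (((b : ℕ) : ℝ) ^ (-s)) * prodPowSum s k (X / ((b : ℕ) : ℝ)) :=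
        prodPowSum_succ s k X
    _ ≤ ∑' b : ℕ+, if ((b : ℕ) : ℝ) ≤ X then
          ENNReal.ofReal (C * X ^ (1 - s) * (1 + Real.log X) ^ m / ((b : ℕ) : ℝ)) else 0 :=
        ENNReal.tsum_le_tsum fun b =>
          rpow_neg_mul_prodPowSum_div_le hC h (Nat.one_le_cast.mpr b.pos)
    _ = ENNReal.ofReal (C * X ^ (1 - s) * (1 + Real.log X) ^ m * harmonic ⌊X⌋₊) :=
        tsum_pnat_ite_le_ofReal_div hK (by linarith)
    _ ≤ ENNReal.ofReal (C * X ^ (1 - s) * (1 + Real.log X) ^ m * (1 + Real.log X)) := by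
        gcongr
        exact harmonic_floor_le_one_add_log X hX
    _ = ENNReal.ofReal (C * X ^ (1 - s) * (1 + Real.log X) ^ (m + 1)) := by
        rw [pow_succ, ← mul_assoc]

lemma ite_le_rpow_neg_mul_prodPowSum_div {s c : ℝ} {k m : ℕ} (hc : 0 ≤ c)
    (h : ∀ Y, 1 ≤ Y → ENNReal.ofReal (c * Y ^ (1 - s) * Real.log Y ^ m) ≤ prodPowSum s k Y)
    {X b : ℝ} (hX : 1 ≤ X) (hb : 0 < b) :
    (if b ≤ √X then ENNReal.ofReal (c * X ^ (1 - s) * (Real.log X / 2) ^ m / b) else 0) ≤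
      ENNReal.ofReal (b ^ (-s)) * prodPowSum s k (X / b) := by
  have hX0 : 0 < X := by linarith
  split_ifs with hbY
  · have hYXb : √X ≤ X / b := by
      rw [le_div_iff₀ hb]
      calc √X * b ≤ √X * √X := by gcongr
        _ = X := Real.mul_self_sqrt hX0.le
    have hlog : Real.log X / 2 ≤ Real.log (X / b) :=
      Real.log_sqrt hX0.le ▸ Real.log_le_log (by positivity) hYXb
    calc ENNReal.ofReal (c * X ^ (1 - s) * (Real.log X / 2) ^ m / b)
        = ENNReal.ofReal (c * (b ^ (-s) * (X / b) ^ (1 - s)) * (Real.log X / 2) ^ m) := by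
          rw [rpow_neg_mul_div_rpow_one_sub s hb hX0.le]; ring_nf
      _ ≤ ENNReal.ofReal (b ^ (-s)) *
          ENNReal.ofReal (c * (X / b) ^ (1 - s) * Real.log (X / b) ^ m) := by
          rw [← ENNReal.ofReal_mul (by positivity)]
          refine ENNReal.ofReal_le_ofReal ?_
          calc _ ≤ c * (b ^ (-s) * (X / b) ^ (1 - s)) * Real.log (X / b) ^ m := by
                gcongr
                linarith [Real.log_nonneg hX]
            _ = _ := by ring
      _ ≤ _ := mul_le_mul_right (h _ ((Real.one_le_sqrt.mpr hX).trans hYXb)) _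
  · exact zero_le

lemma le_prodPowSum_succ {s c : ℝ} {k m : ℕ} (hc : 0 ≤ c)
    (h : ∀ Y, 1 ≤ Y → ENNReal.ofReal (c * Y ^ (1 - s) * Real.log Y ^ m) ≤ prodPowSum s k Y)
    {X : ℝ} (hX : 1 ≤ X) :
    ENNReal.ofReal (c / 2 ^ (m + 1) * X ^ (1 - s) * Real.log X ^ (m + 1)) ≤
      prodPowSum s (k + 1) X := by
  have hK : 0 ≤ c * X ^ (1 - s) * (Real.log X / 2) ^ m := by
    positivity [Real.log_nonneg hX]
  calc ENNReal.ofReal (c / 2 ^ (m + 1) * X ^ (1 - s) * Real.log X ^ (m + 1))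
      = ENNReal.ofReal (c * X ^ (1 - s) * (Real.log X / 2) ^ m * Real.log √X) := by
        rw [Real.log_sqrt (by linarith), div_pow, pow_succ, pow_succ]
        congr 1
        field_simp
    _ ≤ ENNReal.ofReal (c * X ^ (1 - s) * (Real.log X / 2) ^ m * harmonic ⌊√X⌋₊) := by
        gcongr
        exact log_le_harmonic_floor _ (Real.sqrt_nonneg X)
    _ = ∑' b : ℕ+, if ((b : ℕ) : ℝ) ≤ √X then
          ENNReal.ofReal (c * X ^ (1 - s) * (Real.log X / 2) ^ m / ((b : ℕ) : ℝ)) else 0 :=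
        (tsum_pnat_ite_le_ofReal_div hK (Real.sqrt_nonneg X)).symm
    _ ≤ ∑' b : ℕ+,
          ENNReal.ofReal (((b : ℕ) : ℝ) ^ (-s)) * prodPowSum s k (X / ((b : ℕ) : ℝ)) :=
        ENNReal.tsum_le_tsum fun b =>
          ite_le_rpow_neg_mul_prodPowSum_div hc h hX (by exact_mod_cast b.pos)
    _ = prodPowSum s (k + 1) X := (prodPowSum_succ s k X).symm

lemma exists_prodPowSum_le {s : ℝ} (hs0 : 0 ≤ s) (hs1 : s < 1) (m : ℕ) :
    ∃ C > 0, ∀ X, 1 ≤ X →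
      prodPowSum s (m + 1) X ≤ ENNReal.ofReal (C * X ^ (1 - s) * (1 + Real.log X) ^ m) := by
  induction m with
  | zero =>
    refine ⟨1 / (1 - s), by simpa using hs1, fun X hX => ?_⟩
    rw [prodPowSum_one_eq_ofReal_sum s (by linarith), pow_zero, mul_one, one_div_mul_eq_div]
    refine ENNReal.ofReal_le_ofReal ?_
    rw [le_div_iff₀' (by linarith)]
    refine (one_sub_mul_sum_range_rpow_neg_le hs0 hs1 _).trans ?_
    exact Real.rpow_le_rpow (by positivity) (Nat.floor_le (by linarith)) (by linarith)
  | succ m ih =>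
    obtain ⟨C, hC, hCX⟩ := ih
    exact ⟨C, hC, fun X hX => prodPowSum_succ_le hC.le hCX hX⟩

lemma exists_le_prodPowSum {s : ℝ} (hs : 0 ≤ s) (m : ℕ) :
    ∃ c > 0, ∀ X, 1 ≤ X →
      ENNReal.ofReal (c * X ^ (1 - s) * Real.log X ^ m) ≤ prodPowSum s (m + 1) X := by
  induction m with
  | zero =>
    refine ⟨1 / 2, by norm_num, fun X hX => ?_⟩
    rw [prodPowSum_one_eq_ofReal_sum s (by linarith), pow_zero, mul_one, one_div_mul_eq_div]
    exact ENNReal.ofReal_le_ofReal (rpow_one_sub_div_two_le_sum_range_rpow_neg hs hX)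
  | succ m ih =>
    obtain ⟨c, hc, hcX⟩ := ih
    exact ⟨c / 2 ^ (m + 1), by positivity, fun X hX => le_prodPowSum_succ hc.le hcX hX⟩

lemma tsum_ite_eq_toReal_prodPowSum (s : ℝ) (k : ℕ) (X : ℝ) :
    (∑' a : Fin k → ℕ+,
      if (∏ i, ((a i : ℕ) : ℝ)) ≤ X then (∏ i, ((a i : ℕ) : ℝ)) ^ (-s) else 0) =
      (prodPowSum s k X).toReal := by
  rw [prodPowSum, ENNReal.tsum_toReal_eq fun a => by split_ifs <;> simp]
  refine tsum_congr fun a => ?_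
  have := one_le_prod_coe_pnat a
  split_ifs
  · rw [ENNReal.toReal_ofReal (by positivity)]
  · rfl

theorem huang_wu_xu_sum_estimate (β : ℝ) (hβ : 1 < β) (k : ℕ) (hk : 1 ≤ k)
    (s : ℝ) (hs : 0 < s) (hs1 : s < 1) :
    ∃ c C : ℝ, 0 < c ∧ 0 < C ∧ ∀ n : ℕ, 1 ≤ n →
      c * (n : ℝ) ^ (k - 1) * β ^ ((n : ℝ) * (1 - s)) ≤
        (∑' a : Fin k → ℕ+,
          if (∏ i, ((a i : ℕ) : ℝ)) ≤ β ^ n then (∏ i, ((a i : ℕ) : ℝ)) ^ (-s)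
          else 0) ∧
      (∑' a : Fin k → ℕ+,
          if (∏ i, ((a i : ℕ) : ℝ)) ≤ β ^ n then (∏ i, ((a i : ℕ) : ℝ)) ^ (-s)
          else 0) ≤ C * (n : ℝ) ^ (k - 1) * β ^ ((n : ℝ) * (1 - s)) := by
  obtain ⟨m, rfl⟩ : ∃ m, k = m + 1 := ⟨k - 1, by omega⟩
  obtain ⟨c, hc, hlower⟩ := exists_le_prodPowSum hs.le m
  obtain ⟨C, hC, hupper⟩ := exists_prodPowSum_le hs.le hs1 m
  have hlogβ := Real.log_pos hβ
  refine ⟨c * Real.log β ^ m, C * (1 + Real.log β) ^ m, by positivity, by positivity,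
    fun n hn => ?_⟩
  have hX : 1 ≤ β ^ n := one_le_pow₀ hβ.le
  have hlog : Real.log (β ^ n) = n * Real.log β := by rw [Real.log_pow]
  have hfin : prodPowSum s (m + 1) (β ^ n) ≠ ⊤ :=
    ne_top_of_le_ne_top ENNReal.ofReal_ne_top (hupper _ hX)
  rw [tsum_ite_eq_toReal_prodPowSum, Nat.add_sub_cancel, Real.rpow_mul (by linarith),
    Real.rpow_natCast]
  constructor
  · calc c * Real.log β ^ m * (n : ℝ) ^ m * (β ^ n) ^ (1 - s)
        = c * (β ^ n) ^ (1 - s) * Real.log (β ^ n) ^ m := by rw [hlog]; ring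
      _ ≤ _ := (ENNReal.ofReal_le_iff_le_toReal hfin).mp (hlower _ hX)
  · have hn1 : (1 : ℝ) ≤ n := Nat.one_le_cast.mpr hn
    calc _ ≤ C * (β ^ n) ^ (1 - s) * (1 + n * Real.log β) ^ m :=
          hlog ▸ ENNReal.toReal_le_of_le_ofReal (by positivity [Real.log_nonneg hX]) (hupper _ hX)
      _ ≤ C * (β ^ n) ^ (1 - s) * ((1 + Real.log β) * n) ^ m := by gcongr; nlinarith
      _ = C * (1 + Real.log β) ^ m * (n : ℝ) ^ m * (β ^ n) ^ (1 - s) := by rw [mul_pow]; ring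
end
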